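/- If a and b are SP twins, i.e. a and b = a + 1 are both SP numbers, then for every x ∈ Q with x < a, either a • x = b • x, or a • x and b • x are consecutive in Q, i.e. b • x = N(a • x). -/

import Mathlib

/-- A natural number is an SP number if it is a prime times a square `k^2` with `k ≥ 2`. -/
def IsSP (n : ℕ) : Prop := ∃ p k : ℕ, p.Prime ∧ 2 ≤ k ∧ n = p * k ^ 2

/-- `Qset` consists of `1` together with all SP numbers. -/
def Qset : Set ℕ := {n | n = 1 ∨ IsSP n}

/-- `N x` is the smallest element of `Qset` strictly greater than `x`. -/
noncomputable def N (x : ℕ) : ℕ := sInf {y : ℕ | y ∈ Qset ∧ x < y}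

/-- The loop operation: `dot a b = N (|a - b|)`. -/
noncomputable def dot (a b : ℕ) : ℕ := N ((a : ℤ) - (b : ℤ)).natAbs

/-! Only the order structure of `Qset` matters: if `N m` is not `m + 1`, it is also the first
element of `Qset` above `m + 1`; otherwise `N (m + 1)` is by definition `N (N m)`. -/

lemma exists_mem_Qset_gt (m : ℕ) : ∃ y ∈ Qset, m < y :=
  ⟨2 * (m + 2) ^ 2, Or.inr ⟨2, m + 2, Nat.prime_two, by omega, rfl⟩, by nlinarith⟩

lemma N_mem_Qset_and_lt (m : ℕ) : N m ∈ Qset ∧ m < N m :=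
  Nat.sInf_mem (exists_mem_Qset_gt m)

lemma N_le_of_mem_Qset {m y : ℕ} (hy : y ∈ Qset) (hmy : m < y) : N m ≤ y :=
  Nat.sInf_le ⟨hy, hmy⟩

lemma N_mono : Monotone N := fun _ n hmn =>
  N_le_of_mem_Qset (N_mem_Qset_and_lt n).1 (hmn.trans_lt (N_mem_Qset_and_lt n).2)

lemma N_succ_eq_or (m : ℕ) : N (m + 1) = N m ∨ N (m + 1) = N (N m) := by
  obtain ⟨hQ, hlt⟩ := N_mem_Qset_and_lt m
  rcases (Nat.succ_le_of_lt hlt).eq_or_lt with hsucc | hsucc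
  · exact Or.inr (by rw [← hsucc])
  · exact Or.inl (le_antisymm (N_le_of_mem_Qset hQ hsucc) (N_mono m.le_succ))

lemma dot_of_le {a x : ℕ} (hxa : x ≤ a) : dot a x = N (a - x) := by
  rw [dot, ← Nat.cast_sub hxa, Int.natAbs_natCast]

theorem sp_twins_dot_general (a b : ℕ) (hb : b = a + 1)
    (x : ℕ) (hxa : x < a) :
    dot a x = dot b x ∨ dot b x = N (dot a x) := by
  have hdot_b : dot b x = N (a - x + 1) := by
    rw [dot_of_le (by omega), hb, Nat.sub_add_comm hxa.le]
  rw [dot_of_le hxa.le, hdot_b]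
  exact (N_succ_eq_or (a - x)).imp Eq.symm id

theorem sp_twins_dot (a b : ℕ) (ha : IsSP a) (hb : b = a + 1) (hb' : IsSP b)
    (x : ℕ) (hx : x ∈ Qset) (hxa : x < a) :
    dot a x = dot b x ∨ dot b x = N (dot a x) :=
  sp_twins_dot_general a b hb x hxa
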